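/- Let X ≠ 0 be an order-N real tensor of shape (I_1,…,I_N), let c ≥ 1 + Σ_{n=1}^N I_n, let F = {r ∈ [I_1]×⋯×[I_N] : ∏_{n=1}^N R_n + Σ_{n=1}^N I_n R_n ≤ c}, and let r* ∈ F minimize L(X,·) over F. Let 0 ≤ ε ≤ N. If r ∈ F satisfies Σ_{n=1}^N Σ_{i=1}^{R_n} (σ_i^(n))² ≥ (1 − ε/N) · max_{r'∈F} Σ_{n=1}^N Σ_{i=1}^{R'_n} (σ_i^(n))² (i.e., r is a (1−ε/N)-approximation to the Tucker packing problem with coefficients a_i^(n) = (σ_i^(n))²), then RRE(X,r) ≤ N · RRE(X,r*) + ε, where RRE(X,r) = L(X,r)/‖X‖_F². -/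

import Mathlib

open scoped BigOperators
open Matrix

/-- Combine a fixed `n`-th coordinate with coordinates for the remaining modes. -/
def fullIdx {N : ℕ} {I : Fin N → ℕ} (n : Fin N) (i : Fin (I n))
    (j : ∀ m : {m : Fin N // m ≠ n}, Fin (I m.1)) : ∀ k, Fin (I k) :=
  fun k => if h : k = n then Fin.cast (congrArg I h).symm i else j ⟨k, h⟩

/-- Mode-`n` unfolding of a tensor. -/
def modeUnfold {N : ℕ} {I : Fin N → ℕ} (X : (∀ k, Fin (I k)) → ℝ) (n : Fin N) :
    Matrix (Fin (I n)) (∀ m : {m : Fin N // m ≠ n}, Fin (I m.1)) ℝ :=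
  fun i j => X (fullIdx n i j)

/-- Squared Frobenius norm of a tensor. -/
noncomputable def frobSq {N : ℕ} {I : Fin N → ℕ} (X : (∀ k, Fin (I k)) → ℝ) : ℝ :=
  ∑ i : ∀ k, Fin (I k), (X i) ^ 2

/-- Tucker/multilinear reconstruction `G ×₁ A 1 ×₂ ⋯ ×_N A N`. -/
noncomputable def tucker {N : ℕ} {I R : Fin N → ℕ} (G : (∀ k, Fin (R k)) → ℝ)
    (A : ∀ n, Matrix (Fin (I n)) (Fin (R n)) ℝ) : (∀ k, Fin (I k)) → ℝ :=
  fun i => ∑ j : ∀ k, Fin (R k), G j * ∏ n, A n (i n) (j n)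

/-- Optimal rank-`R` Tucker loss `L(X, R)`. -/
noncomputable def tuckerLoss {N : ℕ} (I : Fin N → ℕ) (X : (∀ k, Fin (I k)) → ℝ)
    (R : Fin N → ℕ) : ℝ :=
  sInf {v : ℝ | ∃ (G : (∀ k, Fin (R k)) → ℝ)
    (A : ∀ n, Matrix (Fin (I n)) (Fin (R n)) ℝ),
    v = frobSq (fun i => X i - tucker G A i)}

/-- `σ` lists the singular values of `M` in nonincreasing order:
entries are nonnegative, nonincreasing, and their squares are the eigenvalues
of the positive semidefinite matrix `M * Mᵀ` (up to a permutation). -/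
def IsSingularValues {k : ℕ} {c : Type*} [Fintype c]
    (M : Matrix (Fin k) c ℝ) (σ : Fin k → ℝ) : Prop :=
  (∀ i, 0 ≤ σ i) ∧ Antitone σ ∧
    ∃ e : Equiv.Perm (Fin k), ∀ i, σ i ^ 2 =
      (Matrix.isHermitian_mul_conjTranspose_self M).eigenvalues (e i)

/-- Truncation of a tensor to the leading `R`-block. -/
def truncate {N : ℕ} {I : Fin N → ℕ} (S : (∀ k, Fin (I k)) → ℝ)
    (R : Fin N → ℕ) : (∀ k, Fin (I k)) → ℝ :=
  fun i => if ∀ n, (i n : ℕ) < R n then S i else 0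

/-- Surrogate loss `L̃(X, R)`: sum of the squared tail singular values. -/
noncomputable def surrLoss {N : ℕ} {I : Fin N → ℕ} (σ : ∀ n, Fin (I n) → ℝ)
    (R : Fin N → ℕ) : ℝ :=
  ∑ n, ∑ i ∈ Finset.univ.filter (fun i : Fin (I n) => R n ≤ (i : ℕ)), σ n i ^ 2

/-- Packing objective: sum of the squared leading singular values. -/
noncomputable def packObj {N : ℕ} {I : Fin N → ℕ} (σ : ∀ n, Fin (I n) → ℝ)
    (R : Fin N → ℕ) : ℝ :=
  ∑ n, ∑ i ∈ Finset.univ.filter (fun i : Fin (I n) => (i : ℕ) < R n), σ n i ^ 2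

/-!
The squared singular values of the unfoldings sandwich the Tucker loss:
`L̃(X, R) / N ≤ L(X, R) ≤ L̃(X, R)`, where `L̃(X, R) = N ‖X‖² - packObj σ R` is the total squared
tail. The upper bound is the truncated HOSVD: projecting every mode onto its leading left
singular vectors loses at most the sum of the single-mode losses. The lower bound is
Eckart–Young in each mode, because the mode-`n` unfolding of a Tucker tensor with factor `A n`
has its columns in the range of `A n`. A `(1 - ε/N)`-approximate packing `r` therefore satisfies
`L(X, r) ≤ L̃(X, r) ≤ L̃(X, r*) + ε ‖X‖² ≤ N L(X, r*) + ε ‖X‖²` for every `r* ∈ F`.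
-/

open Finset

lemma sum_filter_lt_add_sum_filter_le {k : ℕ} (f : Fin k → ℝ) (R : ℕ) :
    ∑ i ∈ univ.filter (fun i : Fin k => (i : ℕ) < R), f i
      + ∑ i ∈ univ.filter (fun i : Fin k => R ≤ (i : ℕ)), f i = ∑ i, f i := by
  simp_rw [← not_lt]
  exact sum_filter_add_sum_filter_not _ _ _

/-- Fractional knapsack: for decreasing values `s`, the first `R` items beat every fractional
selection `u` of total size at most `R`. -/
lemma sum_mul_le_sum_filter_lt {k R : ℕ} {s u : Fin k → ℝ} (hs : Antitone s)
    (hs0 : ∀ i, 0 ≤ s i) (hu : ∀ i, u i ∈ Set.Icc 0 1) (hsum : ∑ i, u i ≤ R) :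
    ∑ i, s i * u i ≤ ∑ i ∈ univ.filter (fun i : Fin k => (i : ℕ) < R), s i := by
  rcases le_or_gt k R with hkR | hRk
  · rw [filter_true_of_mem fun i _ => i.2.trans_le hkR]
    exact sum_le_sum fun i _ => mul_le_of_le_one_right (hs0 i) (hu i).2
  · set θ := s ⟨R, hRk⟩
    have hterm : ∀ i, s i * u i - (if (i : ℕ) < R then s i else 0)
        ≤ θ * u i - (if (i : ℕ) < R then θ else 0) := by
      intro i
      obtain ⟨hu0, hu1⟩ := hu i
      split_ifs with hi
      · have : θ ≤ s i := hs (Fin.le_def.mpr hi.le)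
        nlinarith
      · have : s i ≤ θ := hs (Fin.le_def.mpr (not_lt.mp hi))
        nlinarith
    have hcard : (#(univ.filter (fun i : Fin k => (i : ℕ) < R)) : ℝ) = R := by
      rw [Fin.card_filter_val_lt, min_eq_right hRk.le]
    have h := sum_le_sum fun i (_ : i ∈ univ) => hterm i
    simp only [sum_sub_distrib, ← sum_filter, sum_const, nsmul_eq_mul, ← mul_sum, hcard] at h
    nlinarith [hs0 ⟨R, hRk⟩]

lemma sum_castLE_eq_ite {k R : ℕ} (hR : R ≤ k) (i : Fin k) :
    ∑ j : Fin R, (if i = Fin.castLE hR j then (1 : ℝ) else 0) = if (i : ℕ) < R then 1 else 0 := by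
  split_ifs with hi
  · rw [sum_eq_single_of_mem ⟨i, hi⟩ (mem_univ _) fun j _ hj => if_neg fun h =>
      hj (Fin.ext (by simp [h]))]
    simp
  · exact sum_eq_zero fun j _ => if_neg fun h => hi (by simp [h])

namespace Matrix

section Projection

variable {m n d c : Type*} [Fintype m] [Fintype n] [Fintype d] [Fintype c]

def frobNormSq (A : Matrix m c ℝ) : ℝ := ∑ i, ∑ j, A i j ^ 2

lemma frobNormSq_nonneg (A : Matrix m c ℝ) : 0 ≤ frobNormSq A := by
  unfold frobNormSq
  positivity

lemma frobNormSq_eq_trace (A : Matrix m c ℝ) : frobNormSq A = (A * Aᵀ).trace := by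
  simp [frobNormSq, trace, mul_apply, sq]

lemma frobNormSq_add (A B : Matrix m c ℝ) :
    frobNormSq (A + B) = frobNormSq A + frobNormSq B + 2 * (A * Bᵀ).trace := by
  simp only [frobNormSq, trace, diag, mul_apply, transpose_apply, add_apply, mul_sum,
    ← sum_add_distrib]
  exact sum_congr rfl fun _ _ => sum_congr rfl fun _ _ => by ring

lemma IsStarProjection.transpose_eq {P : Matrix n n ℝ} (hP : IsStarProjection P) : Pᵀ = P := by
  simpa [star_eq_conjTranspose, conjTranspose_eq_transpose_of_trivial] using
    hP.isSelfAdjoint.star_eq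

lemma isStarProjection_mul_transpose [DecidableEq d] {A : Matrix n d ℝ} (hA : Aᵀ * A = 1) :
    IsStarProjection (A * Aᵀ) := by
  rw [isStarProjection_iff']
  constructor
  · rw [Matrix.mul_assoc, ← Matrix.mul_assoc Aᵀ, hA, Matrix.one_mul]
  · simp [star_eq_conjTranspose, conjTranspose_eq_transpose_of_trivial]

lemma trace_mul_transpose_eq_card [DecidableEq d] {A : Matrix n d ℝ} (hA : Aᵀ * A = 1) :
    (A * Aᵀ).trace = Fintype.card d := by
  rw [trace_mul_comm, hA, trace_one]

lemma IsStarProjection.diag_mem_Icc {P : Matrix n n ℝ} (hP : IsStarProjection P) (i : n) :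
    P i i ∈ Set.Icc 0 1 := by
  have hsq : P i i = ∑ j, P i j ^ 2 := by
    conv_lhs => rw [← hP.isIdempotentElem.eq, mul_apply]
    refine sum_congr rfl fun j _ => ?_
    rw [sq, ← transpose_apply P i j, hP.transpose_eq]
  have hle : P i i ^ 2 ≤ P i i := hsq ▸ single_le_sum (f := fun j => P i j ^ 2)
    (fun j _ => sq_nonneg _) (mem_univ i)
  have h0 : 0 ≤ P i i := hsq ▸ sum_nonneg fun j _ => sq_nonneg _
  exact ⟨h0, by nlinarith⟩

open scoped RealInnerProductSpace in
/-- The orthogonal projection onto the column space of `A`. -/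
lemma exists_isStarProjection_trace_le_mul_eq [DecidableEq d] (A : Matrix n d ℝ) :
    ∃ P : Matrix n n ℝ, IsStarProjection P ∧ P.trace ≤ Fintype.card d ∧ P * A = A := by
  set K := LinearMap.range (toEuclideanLin A)
  set b := stdOrthonormalBasis ℝ K
  set Q : Matrix n (Fin (Module.finrank ℝ K)) ℝ := of fun i t => (b t : EuclideanSpace ℝ n) i
  have hinner : ∀ t (x : EuclideanSpace ℝ n),
      ⟪(b t : EuclideanSpace ℝ n), x⟫ = ∑ i, Q i t * x i := by
    intro t x
    simp [Q, EuclideanSpace.inner_eq_star_dotProduct, dotProduct, mul_comm]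
  have hQ : Qᵀ * Q = 1 := by
    ext t t'
    rw [one_apply, ← b.inner_eq_ite, Submodule.coe_inner, hinner, mul_apply]
    rfl
  refine ⟨Q * Qᵀ, isStarProjection_mul_transpose hQ, ?_, ?_⟩
  · rw [trace_mul_transpose_eq_card hQ, Fintype.card_fin]
    exact_mod_cast (LinearMap.finrank_range_le _).trans (by simp)
  · ext i j
    have hv : WithLp.toLp 2 (fun l => A l j) ∈ K := ⟨EuclideanSpace.single j 1, by ext; simp⟩
    have := congrArg (fun x : K => (x : EuclideanSpace ℝ n) i) (b.sum_repr' ⟨_, hv⟩)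
    simp only [Submodule.coe_inner, hinner, Submodule.coe_sum, Submodule.coe_smul,
      WithLp.ofLp_sum, WithLp.ofLp_smul, Finset.sum_apply, Pi.smul_apply, smul_eq_mul] at this
    rw [Matrix.mul_assoc, mul_apply, ← this]
    simp [Q, mul_apply, mul_comm]

variable [DecidableEq n]

lemma IsStarProjection.frobNormSq_eq_add {P : Matrix n n ℝ} (hP : IsStarProjection P)
    (Y : Matrix n c ℝ) : frobNormSq Y = frobNormSq (P * Y) + frobNormSq (Y - P * Y) := by
  have hcross : (P * Y * (Y - P * Y)ᵀ).trace = 0 := by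
    rw [show Y - P * Y = (1 - P) * Y by rw [Matrix.sub_mul, Matrix.one_mul], transpose_mul,
      transpose_sub, transpose_one, hP.transpose_eq, trace_mul_comm, Matrix.mul_assoc,
      ← Matrix.mul_assoc (1 - P), hP.one_sub_mul_self, Matrix.zero_mul, Matrix.mul_zero,
      trace_zero]
  conv_lhs => rw [← add_sub_cancel (P * Y) Y]
  rw [frobNormSq_add, hcross, mul_zero, add_zero]

lemma IsStarProjection.frobNormSq_mul_le {P : Matrix n n ℝ} (hP : IsStarProjection P)
    (Y : Matrix n c ℝ) : frobNormSq (P * Y) ≤ frobNormSq Y := by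
  linarith [hP.frobNormSq_eq_add Y, frobNormSq_nonneg (Y - P * Y)]

lemma IsStarProjection.frobNormSq_sub_mul_self {P : Matrix n n ℝ} (hP : IsStarProjection P)
    (Y : Matrix n c ℝ) : frobNormSq (Y - P * Y) = (Y * Yᵀ).trace - (Y * Yᵀ * P).trace := by
  have hPY : frobNormSq (P * Y) = (Y * Yᵀ * P).trace := by
    rw [frobNormSq_eq_trace, transpose_mul, hP.transpose_eq, trace_mul_comm, Matrix.mul_assoc,
      ← Matrix.mul_assoc P, hP.isIdempotentElem.eq, ← Matrix.mul_assoc, trace_mul_comm,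
      Matrix.mul_assoc]
  rw [← frobNormSq_eq_trace, ← hPY, hP.frobNormSq_eq_add Y]
  ring

lemma IsStarProjection.frobNormSq_sub_mul_self_le {P : Matrix n n ℝ} (hP : IsStarProjection P)
    {Y B : Matrix n c ℝ} (hPB : P * B = B) : frobNormSq (Y - P * Y) ≤ frobNormSq (Y - B) := by
  have h : (Y - B) - P * (Y - B) = Y - P * Y := by rw [Matrix.mul_sub, hPB]; abel
  have := hP.frobNormSq_eq_add (Y - B)
  rw [h] at this
  linarith [frobNormSq_nonneg (P * (Y - B))]

/-- `Y - T Q Y = (Y - T Y) + T (Y - Q Y)`, and the two summands are orthogonal. -/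
lemma IsStarProjection.frobNormSq_sub_mul_mul_le {T : Matrix n n ℝ} (hT : IsStarProjection T)
    (Q : Matrix n n ℝ) (Y : Matrix n c ℝ) :
    frobNormSq (Y - T * Q * Y) ≤ frobNormSq (Y - T * Y) + frobNormSq (Y - Q * Y) := by
  have hdecomp : Y - T * Q * Y = (1 - T) * Y + T * (Y - Q * Y) := by
    simp only [Matrix.sub_mul, Matrix.mul_sub, Matrix.one_mul, Matrix.mul_assoc]
    abel
  have hcross : ((1 - T) * Y * (T * (Y - Q * Y))ᵀ).trace = 0 := by
    rw [transpose_mul, hT.transpose_eq, ← Matrix.mul_assoc, trace_mul_comm,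
      ← Matrix.mul_assoc, ← Matrix.mul_assoc, hT.mul_one_sub_self, Matrix.zero_mul,
      Matrix.zero_mul, trace_zero]
  rw [hdecomp, frobNormSq_add, hcross, Matrix.sub_mul, Matrix.one_mul]
  linarith [hT.frobNormSq_mul_le (Y - Q * Y)]

end Projection

lemma IsHermitian.trace_mul_eq_sum {n : Type*} [Fintype n] [DecidableEq n] {A : Matrix n n ℝ}
    (hA : A.IsHermitian) (P : Matrix n n ℝ) :
    (A * P).trace =
      ∑ i, hA.eigenvalues i * Unitary.conjStarAlgAut ℝ _ (star hA.eigenvectorUnitary) P i i := by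
  set φ := Unitary.conjStarAlgAut ℝ (Matrix n n ℝ) hA.eigenvectorUnitary
  conv_lhs => rw [hA.spectral_theorem, ← φ.apply_symm_apply P, ← map_mul, trace_map']
  simp [φ, trace, mul_apply, diagonal_apply]

section PiKron

variable {ι R : Type*} [Fintype ι] [CommSemiring R] {κ μ ν : ι → Type*}

/-- The matrix of the multilinear product `X ↦ X ×₁ A 1 ×₂ ⋯` on tensors indexed by `∀ i, κ i`. -/
def piKron (A : ∀ i, Matrix (κ i) (μ i) R) : Matrix (∀ i, κ i) (∀ i, μ i) R :=
  of fun x y => ∏ i, A i (x i) (y i)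

lemma piKron_apply (A : ∀ i, Matrix (κ i) (μ i) R) (x : ∀ i, κ i) (y : ∀ i, μ i) :
    piKron A x y = ∏ i, A i (x i) (y i) := rfl

lemma transpose_piKron (A : ∀ i, Matrix (κ i) (μ i) R) :
    (piKron A)ᵀ = piKron fun i => (A i)ᵀ := rfl

lemma piKron_mul [DecidableEq ι] [∀ i, Fintype (μ i)] (A : ∀ i, Matrix (κ i) (μ i) R)
    (B : ∀ i, Matrix (μ i) (ν i) R) : piKron A * piKron B = piKron fun i => A i * B i := by
  ext x z
  simp only [mul_apply, piKron_apply, ← prod_mul_distrib]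
  exact (Fintype.prod_sum fun i t => A i (x i) t * B i t (z i)).symm

lemma piKron_one [∀ i, DecidableEq (κ i)] : piKron (1 : ∀ i, Matrix (κ i) (κ i) R) = 1 := by
  ext x y
  simp [piKron_apply, one_apply, Fintype.prod_boole, funext_iff]

end PiKron

section PiKronProjection

variable {ι c : Type*} [Fintype ι] [DecidableEq ι] [Fintype c] {κ : ι → Type*}
  [∀ i, Fintype (κ i)]

lemma IsStarProjection.piKron {P : ∀ i, Matrix (κ i) (κ i) ℝ}
    (hP : ∀ i, IsStarProjection (P i)) : IsStarProjection (piKron P) := by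
  rw [isStarProjection_iff', piKron_mul, star_eq_conjTranspose,
    conjTranspose_eq_transpose_of_trivial, transpose_piKron]
  exact ⟨congrArg _ (funext fun i => (hP i).isIdempotentElem.eq),
    congrArg _ (funext fun i => (hP i).transpose_eq)⟩

theorem frobNormSq_sub_piKron_mul_le [∀ i, DecidableEq (κ i)]
    {P : ∀ i, Matrix (κ i) (κ i) ℝ} (hP : ∀ i, IsStarProjection (P i))
    (Y : Matrix (∀ i, κ i) c ℝ) :
    frobNormSq (Y - piKron P * Y)
      ≤ ∑ i, frobNormSq (Y - piKron (Function.update 1 i (P i)) * Y) := by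
  suffices h : ∀ s : Finset ι, frobNormSq (Y - piKron (s.piecewise P 1) * Y)
      ≤ ∑ i ∈ s, frobNormSq (Y - piKron (Function.update 1 i (P i)) * Y) by
    simpa using h univ
  intro s
  induction s using Finset.induction_on with
  | empty => simp [piKron_one, frobNormSq]
  | insert a s ha ih =>
    have hupdate : IsStarProjection (piKron (Function.update 1 a (P a))) := by
      refine IsStarProjection.piKron fun i => ?_
      rcases eq_or_ne i a with rfl | hi
      · simpa using hP i
      · simp [hi]
    have hsplit : piKron ((insert a s).piecewise P 1)
        = piKron (Function.update 1 a (P a)) * piKron (s.piecewise P 1) := by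
      rw [piKron_mul]
      congr 1
      funext i
      rcases eq_or_ne i a with rfl | hi
      · simp [ha]
      · simp [hi]
    rw [hsplit, sum_insert ha]
    linarith [hupdate.frobNormSq_sub_mul_mul_le (piKron (s.piecewise P 1)) Y]

end PiKronProjection

end Matrix

section SingularValues

variable {k : ℕ} {c : Type*} [Fintype c] {M : Matrix (Fin k) c ℝ} {σ : Fin k → ℝ}

lemma trace_mul_transpose_mul_eq_sum {e : Equiv.Perm (Fin k)}
    (he : ∀ i, σ i ^ 2 = (isHermitian_mul_conjTranspose_self M).eigenvalues (e i))
    (P : Matrix (Fin k) (Fin k) ℝ) :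
    (M * Mᵀ * P).trace = ∑ i, σ i ^ 2 * Unitary.conjStarAlgAut ℝ _
      (star (isHermitian_mul_conjTranspose_self M).eigenvectorUnitary) P (e i) (e i) := by
  rw [← conjTranspose_eq_transpose_of_trivial,
    (isHermitian_mul_conjTranspose_self M).trace_mul_eq_sum, ← Equiv.sum_comp e]
  simp only [he]

lemma IsSingularValues.sum_sq_eq_trace (hσ : IsSingularValues M σ) :
    ∑ i, σ i ^ 2 = (M * Mᵀ).trace := by
  obtain ⟨-, -, e, he⟩ := hσ
  simpa using (trace_mul_transpose_mul_eq_sum he 1).symm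

lemma IsSingularValues.antitone_sq (hσ : IsSingularValues M σ) : Antitone fun i => σ i ^ 2 :=
  fun _ j hij => pow_le_pow_left₀ (hσ.1 j) (hσ.2.1 hij) 2

/-- Eckart–Young: in the eigenbasis of `M Mᵀ` the diagonal of `P` is a fractional selection of
total size `trace P`. -/
theorem IsSingularValues.sum_tail_le_frobNormSq_sub (hσ : IsSingularValues M σ) {R : ℕ}
    {P : Matrix (Fin k) (Fin k) ℝ} (hP : IsStarProjection P) (htr : P.trace ≤ R)
    {B : Matrix (Fin k) c ℝ} (hPB : P * B = B) :
    ∑ i ∈ univ.filter (fun i : Fin k => R ≤ (i : ℕ)), σ i ^ 2 ≤ frobNormSq (M - B) := by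
  obtain ⟨-, -, e, he⟩ := id hσ
  set V := Unitary.conjStarAlgAut ℝ _
    (star (isHermitian_mul_conjTranspose_self M).eigenvectorUnitary) P
  have hV : IsStarProjection V := hP.map _
  have hVtr : ∑ i, V (e i) (e i) ≤ R := by
    rw [Equiv.sum_comp e fun i => V i i]
    exact (trace_map' _ P).trans_le htr
  have hhead := sum_mul_le_sum_filter_lt hσ.antitone_sq (fun i => sq_nonneg (σ i))
    (fun i => hV.diag_mem_Icc (e i)) hVtr
  have hsplit := sum_filter_lt_add_sum_filter_le (fun i => σ i ^ 2) R
  calc _ ≤ (M * Mᵀ).trace - (M * Mᵀ * P).trace := by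
        rw [← hσ.sum_sq_eq_trace, trace_mul_transpose_mul_eq_sum he]
        linarith
    _ = frobNormSq (M - P * M) := (hP.frobNormSq_sub_mul_self M).symm
    _ ≤ frobNormSq (M - B) := hP.frobNormSq_sub_mul_self_le hPB

/-- The witness is the truncated HOSVD factor: the eigenvectors of `M Mᵀ` belonging to the `R`
largest singular values. -/
theorem IsSingularValues.exists_frobNormSq_sub_eq (hσ : IsSingularValues M σ) {R : ℕ}
    (hR : R ≤ k) : ∃ A : Matrix (Fin k) (Fin R) ℝ, Aᵀ * A = 1 ∧
      frobNormSq (M - A * Aᵀ * M) = ∑ i ∈ univ.filter (fun i : Fin k => R ≤ (i : ℕ)), σ i ^ 2 := by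
  obtain ⟨-, -, e, he⟩ := id hσ
  set u := (isHermitian_mul_conjTranspose_self M).eigenvectorUnitary
  set U : Matrix (Fin k) (Fin k) ℝ := ↑u with hU
  have huu : star U * U = 1 := Unitary.coe_star_mul_self u
  have hut : Uᵀ = star U := by
    simp [star_eq_conjTranspose, conjTranspose_eq_transpose_of_trivial]
  set S : Matrix (Fin k) (Fin R) ℝ :=
    (1 : Matrix (Fin k) (Fin k) ℝ).submatrix e.symm (Fin.castLE hR)
  have hSS : Sᵀ * S = 1 := by
    rw [transpose_submatrix, transpose_one, submatrix_mul_equiv _ _ _ e.symm, Matrix.one_mul,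
      submatrix_one _ (Fin.castLE_injective hR)]
  have hdiag : ∀ i, (S * Sᵀ) (e i) (e i) = if (i : ℕ) < R then 1 else 0 := by
    intro i
    rw [← sum_castLE_eq_ite hR i]
    simp +contextual [S, mul_apply, one_apply, eq_comm]
  have hA : (U * S)ᵀ * (U * S) = 1 := by
    rw [transpose_mul, Matrix.mul_assoc, ← Matrix.mul_assoc Uᵀ, hut, huu, Matrix.one_mul, hSS]
  refine ⟨U * S, hA, ?_⟩
  have hV : Unitary.conjStarAlgAut ℝ _ (star u) (U * S * (U * S)ᵀ) = S * Sᵀ := by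
    rw [Unitary.conjStarAlgAut_star_apply, ← hU, transpose_mul, hut, Matrix.mul_assoc,
      Matrix.mul_assoc, Matrix.mul_assoc, Matrix.mul_assoc, huu, Matrix.mul_one,
      ← Matrix.mul_assoc, huu, Matrix.one_mul]
  have hsplit := sum_filter_lt_add_sum_filter_le (fun i => σ i ^ 2) R
  rw [(isStarProjection_mul_transpose hA).frobNormSq_sub_mul_self, ← hσ.sum_sq_eq_trace,
    trace_mul_transpose_mul_eq_sum he, hV]
  simp only [hdiag, mul_ite, mul_one, mul_zero, ← sum_filter]
  linarith

end SingularValues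
section Tensor

variable {N : ℕ} {I : Fin N → ℕ}

lemma fullIdx_eq_piSplitAt_symm (n : Fin N) (a : Fin (I n))
    (j : ∀ m : {m : Fin N // m ≠ n}, Fin (I m.1)) :
    fullIdx n a j = (Equiv.piSplitAt n fun k => Fin (I k)).symm (a, j) := by
  funext k
  by_cases h : k = n
  · subst h
    simp [fullIdx]
  · simp [fullIdx, h]

lemma frobSq_nonneg (X : (∀ k, Fin (I k)) → ℝ) : 0 ≤ frobSq X :=
  sum_nonneg fun _ _ => sq_nonneg _

lemma frobSq_eq_frobNormSq_modeUnfold (X : (∀ k, Fin (I k)) → ℝ) (n : Fin N) :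
    frobSq X = (modeUnfold X n).frobNormSq := by
  rw [frobSq, ← (Equiv.piSplitAt n _).symm.sum_comp, Fintype.sum_prod_type]
  simp [frobNormSq, modeUnfold, fullIdx_eq_piSplitAt_symm]

lemma frobSq_sub_mulVec (K : Matrix (∀ k, Fin (I k)) (∀ k, Fin (I k)) ℝ)
    (X : (∀ k, Fin (I k)) → ℝ) :
    frobSq (X - K *ᵥ X) = (replicateCol Unit X - K * replicateCol Unit X).frobNormSq := by
  rw [← replicateCol_mulVec]
  simp [frobSq, frobNormSq]

lemma modeUnfold_sub (X Y : (∀ k, Fin (I k)) → ℝ) (n : Fin N) :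
    modeUnfold (X - Y) n = modeUnfold X n - modeUnfold Y n := rfl

lemma modeUnfold_piKron_update_mulVec (n : Fin N) (B : Matrix (Fin (I n)) (Fin (I n)) ℝ)
    (X : (∀ k, Fin (I k)) → ℝ) :
    modeUnfold (piKron (Function.update 1 n B) *ᵥ X) n = B * modeUnfold X n := by
  ext a j
  simp only [modeUnfold, fullIdx_eq_piSplitAt_symm, mulVec, dotProduct, mul_apply]
  set e := Equiv.piSplitAt n fun k => Fin (I k)
  have hentry : ∀ b j', piKron (Function.update 1 n B) (e.symm (a, j)) (e.symm (b, j'))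
      = B a b * (1 : Matrix _ _ ℝ) j j' := by
    intro b j'
    rw [piKron_apply, Fintype.prod_eq_mul_prod_subtype_ne _ n, ← piKron_one, piKron_apply]
    congr 1
    · simp [e]
    · exact prod_congr rfl fun m _ => by simp [e, m.2]
  rw [← e.symm.sum_comp, Fintype.sum_prod_type]
  refine sum_congr rfl fun b _ => ?_
  simp [hentry, one_apply]

lemma tucker_eq_piKron_mulVec {R : Fin N → ℕ} (G : (∀ k, Fin (R k)) → ℝ)
    (A : ∀ n, Matrix (Fin (I n)) (Fin (R n)) ℝ) : tucker G A = piKron A *ᵥ G := by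
  ext i
  simp [tucker, mulVec, dotProduct, piKron_apply, mul_comm]

lemma exists_modeUnfold_tucker_eq_mul {R : Fin N → ℕ} (G : (∀ k, Fin (R k)) → ℝ)
    (A : ∀ n, Matrix (Fin (I n)) (Fin (R n)) ℝ) (n : Fin N) :
    ∃ C : Matrix (Fin (R n)) (∀ m : {m : Fin N // m ≠ n}, Fin (I m.1)) ℝ,
      modeUnfold (tucker G A) n = A n * C := by
  set e := Equiv.piSplitAt n fun k => Fin (R k)
  refine ⟨of fun t j => ∑ j', G (e.symm (t, j')) * ∏ m : {m // m ≠ n}, A m (j m) (j' m), ?_⟩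
  ext a j
  simp only [modeUnfold, fullIdx_eq_piSplitAt_symm, tucker, mul_apply, of_apply, mul_sum]
  rw [← e.symm.sum_comp, Fintype.sum_prod_type]
  refine sum_congr rfl fun t _ => sum_congr rfl fun j' _ => ?_
  rw [Fintype.prod_eq_mul_prod_subtype_ne _ n]
  have hne : ∀ m : {m : Fin N // m ≠ n}, (m : Fin N) ≠ n := fun m => m.2
  simp only [ne_eq, Equiv.piSplitAt_symm_apply, ↓reduceDIte, hne, e]
  ring

section TuckerLoss

variable {X : (∀ k, Fin (I k)) → ℝ} {R : Fin N → ℕ}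

lemma tuckerLoss_le (G : (∀ k, Fin (R k)) → ℝ) (A : ∀ n, Matrix (Fin (I n)) (Fin (R n)) ℝ) :
    tuckerLoss I X R ≤ frobSq (X - tucker G A) :=
  csInf_le ⟨0, by rintro _ ⟨G, A, rfl⟩; exact frobSq_nonneg _⟩ ⟨G, A, rfl⟩

lemma le_tuckerLoss {b : ℝ} (h : ∀ (G : (∀ k, Fin (R k)) → ℝ)
    (A : ∀ n, Matrix (Fin (I n)) (Fin (R n)) ℝ), b ≤ frobSq (X - tucker G A)) :
    b ≤ tuckerLoss I X R :=
  le_csInf ⟨_, 0, fun _ => 0, rfl⟩ fun _ ⟨G, A, hv⟩ => hv ▸ h G A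

lemma surrLoss_nonneg (σ : ∀ n, Fin (I n) → ℝ) (R : Fin N → ℕ) : 0 ≤ surrLoss σ R :=
  sum_nonneg fun _ _ => sum_nonneg fun _ _ => sq_nonneg _

variable {σ : ∀ n, Fin (I n) → ℝ}

lemma packObj_add_surrLoss (hσ : ∀ n, IsSingularValues (modeUnfold X n) (σ n)) :
    packObj σ R + surrLoss σ R = N * frobSq X := by
  simp only [packObj, surrLoss, ← sum_add_distrib, sum_filter_lt_add_sum_filter_le,
    (hσ _).sum_sq_eq_trace, ← frobNormSq_eq_trace, ← frobSq_eq_frobNormSq_modeUnfold]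
  simp

/-- Witness: the truncated HOSVD, with core `X ×₁ (A 1)ᵀ ×₂ ⋯`. -/
theorem tuckerLoss_le_surrLoss (hσ : ∀ n, IsSingularValues (modeUnfold X n) (σ n))
    (hR : ∀ n, R n ≤ I n) : tuckerLoss I X R ≤ surrLoss σ R := by
  choose A hA hres using fun n => (hσ n).exists_frobNormSq_sub_eq (hR n)
  set P := fun n => A n * (A n)ᵀ
  have hP : ∀ n, IsStarProjection (P n) := fun n => isStarProjection_mul_transpose (hA n)
  calc tuckerLoss I X R ≤ frobSq (X - tucker (piKron (fun n => (A n)ᵀ) *ᵥ X) A) :=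
        tuckerLoss_le _ _
    _ = frobSq (X - piKron P *ᵥ X) := by
        rw [tucker_eq_piKron_mulVec, mulVec_mulVec, piKron_mul]
    _ ≤ ∑ n, frobSq (X - piKron (Function.update 1 n (P n)) *ᵥ X) := by
        simp only [frobSq_sub_mulVec]
        exact frobNormSq_sub_piKron_mul_le hP _
    _ = surrLoss σ R := by
        refine sum_congr rfl fun n _ => ?_
        rw [frobSq_eq_frobNormSq_modeUnfold _ n, modeUnfold_sub, modeUnfold_piKron_update_mulVec,
          hres]

/-- Each mode-`n` tail is an Eckart–Young lower bound for every rank-`R` Tucker error. -/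
theorem surrLoss_le_mul_tuckerLoss (hσ : ∀ n, IsSingularValues (modeUnfold X n) (σ n)) :
    surrLoss σ R ≤ N * tuckerLoss I X R := by
  have htail : ∀ n, ∑ i ∈ univ.filter (fun i : Fin (I n) => R n ≤ (i : ℕ)), σ n i ^ 2
      ≤ tuckerLoss I X R := fun n => le_tuckerLoss fun G A => by
    obtain ⟨C, hC⟩ := exists_modeUnfold_tucker_eq_mul G A n
    obtain ⟨P, hP, htr, hPA⟩ := exists_isStarProjection_trace_le_mul_eq (A n)
    rw [frobSq_eq_frobNormSq_modeUnfold _ n, modeUnfold_sub, hC]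
    exact (hσ n).sum_tail_le_frobNormSq_sub hP (by simpa using htr)
      (by rw [← Matrix.mul_assoc, hPA])
  calc surrLoss σ R ≤ ∑ _n : Fin N, tuckerLoss I X R := sum_le_sum fun n _ => htail n
    _ = N * tuckerLoss I X R := by simp

end TuckerLoss

end Tensor

/-- Also valid for `w = 0`, where both quotients are `0`. -/
lemma div_le_mul_div_add_of_le {a b w ε N : ℝ} (hw : 0 ≤ w) (hε : 0 ≤ ε)
    (h : a ≤ N * b + ε * w) : a / w ≤ N * (b / w) + ε :=
  calc a / w ≤ (N * b + ε * w) / w := div_le_div_of_nonneg_right h hw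
    _ = N * (b / w) + ε * (w / w) := by ring
    _ ≤ N * (b / w) + ε := by
      gcongr
      exact mul_le_of_le_one_right hε (div_self_le_one w)

theorem rre_of_approximate_packing_general {N : ℕ} {I : Fin N → ℕ}
    (X : (∀ k, Fin (I k)) → ℝ)
    (σ : ∀ n, Fin (I n) → ℝ) (hσ : ∀ n, IsSingularValues (modeUnfold X n) (σ n))
    (c : ℕ)
    (F : Set (Fin N → ℕ))
    (hF : F = {R | (∀ n, 1 ≤ R n ∧ R n ≤ I n) ∧
      (∏ n, R n) + ∑ n, I n * R n ≤ c})
    (rstar : Fin N → ℕ) (hrstar : rstar ∈ F)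
    (ε : ℝ) (hε0 : 0 ≤ ε)
    (r : Fin N → ℕ) (hr : r ∈ F)
    (happrox : ∀ R ∈ F, (1 - ε / N) * packObj σ R ≤ packObj σ r) :
    tuckerLoss I X r / frobSq X ≤ N * (tuckerLoss I X rstar / frobSq X) + ε := by
  subst hF
  have hpack_le : packObj σ rstar ≤ N * frobSq X := by
    linarith [packObj_add_surrLoss hσ (R := rstar), surrLoss_nonneg σ rstar]
  have hslack : ε / N * packObj σ rstar ≤ ε * frobSq X := by
    rcases eq_or_ne (N : ℝ) 0 with hN | hN
    · rw [hN, div_zero, zero_mul]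
      exact mul_nonneg hε0 (frobSq_nonneg X)
    · calc ε / N * packObj σ rstar ≤ ε / N * (N * frobSq X) := by gcongr
        _ = ε * frobSq X := by field_simp
  refine div_le_mul_div_add_of_le (frobSq_nonneg X) hε0 ?_
  linarith [tuckerLoss_le_surrLoss hσ fun n => (hr.1 n).2, happrox rstar hrstar,
    surrLoss_le_mul_tuckerLoss hσ (R := rstar), packObj_add_surrLoss hσ (R := r),
    packObj_add_surrLoss hσ (R := rstar)]

/-- **RRE guarantee for approximate Tucker packing**: if `r ∈ F` is a
`(1 − ε/N)`-approximation to the Tucker packing problem with coefficients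
`(σ_i⁽ⁿ⁾)²`, then `RRE(X,r) ≤ N·RRE(X,r*) + ε`, where `r*` minimizes the Tucker
loss over `F` and `RRE(X,r) = L(X,r)/‖X‖_F²`. -/
theorem rre_of_approximate_packing {N : ℕ} {I : Fin N → ℕ} (hI : ∀ n, 1 ≤ I n)
    (X : (∀ k, Fin (I k)) → ℝ) (hX : X ≠ 0)
    (σ : ∀ n, Fin (I n) → ℝ) (hσ : ∀ n, IsSingularValues (modeUnfold X n) (σ n))
    (c : ℕ) (hc : 1 + ∑ n, I n ≤ c)
    (F : Set (Fin N → ℕ))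
    (hF : F = {R | (∀ n, 1 ≤ R n ∧ R n ≤ I n) ∧
      (∏ n, R n) + ∑ n, I n * R n ≤ c})
    (rstar : Fin N → ℕ) (hrstar : rstar ∈ F)
    (hrstarmin : ∀ R ∈ F, tuckerLoss I X rstar ≤ tuckerLoss I X R)
    (ε : ℝ) (hε0 : 0 ≤ ε) (hεN : ε ≤ N)
    (r : Fin N → ℕ) (hr : r ∈ F)
    (happrox : ∀ R ∈ F, (1 - ε / N) * packObj σ R ≤ packObj σ r) :
    tuckerLoss I X r / frobSq X ≤ N * (tuckerLoss I X rstar / frobSq X) + ε :=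
  rre_of_approximate_packing_general X σ hσ c F hF rstar hrstar ε hε0 r hr happrox
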